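/- Let 1 ≤ j' < j₀ and suppose σ_j = 0 for all j > j'. Assume D₁ := Σ_{i=1}^{j₀} σ_i dim V_i > 0 and D₂ := Σ_{i=1}^{j₀} σ_i dim W_i > 0. If the representation M of Q is σ-semistable, then the truncated representation π(M) of the subquiver Q' is σ'-semistable, where σ' = (σ₁,…,σ_{j'}); that is, θ_{σ'}(M') ≤ 0 for every subrepresentation M' of π(M). (This is the quiver-theoretic content of the lemma asserting that the projection π : R → R' of representation spaces induced by the subquiver inclusion Q' ⊂ Q maps the σ-semistable locus R^{σ-ss} into the σ'-semistable locus R'^{σ'-ss}.) -/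
import Mathlib


open TensorProduct Module

/-- The image `φ(V' ⊗ H)` of the subspace `V' ⊗ H ⊆ V ⊗ H` under a linear map
`φ : V ⊗ H → W`. -/
noncomputable def tensorImage {k : Type*} [Field k] {V H W : Type*}
    [AddCommGroup V] [Module k V] [AddCommGroup H] [Module k H]
    [AddCommGroup W] [Module k W]
    (φ : V ⊗[k] H →ₗ[k] W) (V' : Submodule k V) : Submodule k W :=
  Submodule.map φ (LinearMap.range (LinearMap.rTensor H V'.subtype))

/-- Let `σ` be a degenerate stability parameter vanishing in all rows beyond the
`j'`-th one, with `D₁ = Σᵢ σᵢ dim Vᵢ > 0` and `D₂ = Σᵢ σᵢ dim Wᵢ > 0`. If the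
representation `M = ((V i), (W j), (φ i j))` of `Q` is `σ`-semistable (i.e.
`θ_σ(M') ≤ 0` for every subrepresentation `M'` of `M`), then the truncated
representation `π(M)` of the subquiver `Q'` is `σ'`-semistable, where
`σ' = (σ₁, …, σ_{j'})` and `θ_{σ'}` is computed with the denominators
`D₁' = Σ_{i<j'} σᵢ dim Vᵢ` and `D₂' = Σ_{i<j'} σᵢ dim Wᵢ`. -/
theorem truncation_semistable {k : Type*} [Field k] {j₀ : ℕ}
    (V W : Fin j₀ → Type*) (H : Fin j₀ → Fin j₀ → Type*)
    [∀ i, AddCommGroup (V i)] [∀ i, Module k (V i)]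
    [∀ i, AddCommGroup (W i)] [∀ i, Module k (W i)]
    [∀ i, FiniteDimensional k (V i)] [∀ i, FiniteDimensional k (W i)]
    [∀ i j, AddCommGroup (H i j)] [∀ i j, Module k (H i j)]
    [∀ i j, FiniteDimensional k (H i j)]
    (φ : ∀ i j, (V i ⊗[k] H i j) →ₗ[k] W j)
    (σ : Fin j₀ → ℚ) (hσ : ∀ j, 0 ≤ σ j) (hσne : σ ≠ 0)
    (j' : ℕ) (hj'1 : 1 ≤ j') (hj' : j' < j₀)
    (hvanish : ∀ j : Fin j₀, j' ≤ (j : ℕ) → σ j = 0)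
    (hD₁ : 0 < ∑ i, σ i * (finrank k (V i) : ℚ))
    (hD₂ : 0 < ∑ i, σ i * (finrank k (W i) : ℚ))
    (hss : ∀ (V' : ∀ i, Submodule k (V i)) (W' : ∀ j, Submodule k (W j)),
      (∀ i j : Fin j₀, tensorImage (φ i j) (V' i) ≤ W' j) →
      (∑ j, σ j * (finrank k (V' j) : ℚ)) / (∑ i, σ i * (finrank k (V i) : ℚ)) -
        (∑ j, σ j * (finrank k (W' j) : ℚ)) /
          (∑ i, σ i * (finrank k (W i) : ℚ)) ≤ 0) :
    ∀ (V'' : ∀ i, Submodule k (V i)) (W'' : ∀ j, Submodule k (W j)),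
      (∀ i j : Fin j₀, (i : ℕ) < j' → (j : ℕ) < j' →
        tensorImage (φ i j) (V'' i) ≤ W'' j) →
      (∑ j ∈ Finset.univ.filter (fun j : Fin j₀ => (j : ℕ) < j'),
          σ j * (finrank k (V'' j) : ℚ)) /
        (∑ i ∈ Finset.univ.filter (fun i : Fin j₀ => (i : ℕ) < j'),
          σ i * (finrank k (V i) : ℚ)) -
      (∑ j ∈ Finset.univ.filter (fun j : Fin j₀ => (j : ℕ) < j'),
          σ j * (finrank k (W'' j) : ℚ)) /
        (∑ i ∈ Finset.univ.filter (fun i : Fin j₀ => (i : ℕ) < j'),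
          σ i * (finrank k (W i) : ℚ)) ≤ 0 := by
  intro V'' W'' hsub
  classical
  set V' : ∀ i, Submodule k (V i) := fun i => if (i : ℕ) < j' then V'' i else ⊥ with hV'
  set W' : ∀ j, Submodule k (W j) := fun j => if (j : ℕ) < j' then W'' j else ⊤ with hW'
  have hbot : ∀ (i j : Fin j₀), tensorImage (φ i j) (⊥ : Submodule k (V i)) = ⊥ := by
    intro i j
    have hsub0 : (⊥ : Submodule k (V i)).subtype = 0 := by
      ext x; simpa using (Submodule.mem_bot k).mp x.2
    simp [tensorImage, hsub0]
  have hcond : ∀ i j : Fin j₀, tensorImage (φ i j) (V' i) ≤ W' j := by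
    intro i j
    by_cases hi : (i : ℕ) < j'
    · by_cases hj : (j : ℕ) < j'
      · simpa [hV', hW', hi, hj] using hsub i j hi hj
      · simp [hW', hj]
    · simp [hV', hi, hbot]
  have h := hss V' W' hcond
  have e1 : ∑ j ∈ Finset.univ.filter (fun j : Fin j₀ => (j : ℕ) < j'),
      σ j * (finrank k (V'' j) : ℚ) = ∑ j, σ j * (finrank k (V' j) : ℚ) := by
    rw [Finset.sum_filter]
    refine Finset.sum_congr rfl fun j _ => ?_
    by_cases hj : (j : ℕ) < j'
    · rw [show V' j = V'' j from if_pos hj]; exact if_pos hj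
    · simp [hvanish j (le_of_not_gt hj)]
  have e2 : ∑ j ∈ Finset.univ.filter (fun j : Fin j₀ => (j : ℕ) < j'),
      σ j * (finrank k (W'' j) : ℚ) = ∑ j, σ j * (finrank k (W' j) : ℚ) := by
    rw [Finset.sum_filter]
    refine Finset.sum_congr rfl fun j _ => ?_
    by_cases hj : (j : ℕ) < j'
    · rw [show W' j = W'' j from if_pos hj]; exact if_pos hj
    · simp [hvanish j (le_of_not_gt hj)]
  have e3 : ∑ i ∈ Finset.univ.filter (fun i : Fin j₀ => (i : ℕ) < j'),
      σ i * (finrank k (V i) : ℚ) = ∑ i, σ i * (finrank k (V i) : ℚ) := by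
    rw [Finset.sum_filter]
    refine Finset.sum_congr rfl fun i _ => ?_
    by_cases hi : (i : ℕ) < j'
    · simp [hi]
    · simp [hi, hvanish i (le_of_not_gt hi)]
  have e4 : ∑ i ∈ Finset.univ.filter (fun i : Fin j₀ => (i : ℕ) < j'),
      σ i * (finrank k (W i) : ℚ) = ∑ i, σ i * (finrank k (W i) : ℚ) := by
    rw [Finset.sum_filter]
    refine Finset.sum_congr rfl fun i _ => ?_
    by_cases hi : (i : ℕ) < j'
    · simp [hi]
    · simp [hi, hvanish i (le_of_not_gt hi)]
  rw [e1, e2, e3, e4]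
  exact h
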